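/- Let u be a Sturmian word with slope β = [0,1,b₂,b₃,…], let w be a factor of u and r ∈ ℚ, r ≥ 2 with v = w^r a factor of u. Let φ: A ↦ A^c B, B ↦ A. Then v' = φ(v)A^c is a rational power of w' = φ(w) (with exponent |v'|/|w'| ≥ 2) and v' is a factor of the Sturmian word φ(u), which has slope [0,1,c,b₂,b₃,…]. -/

import Mathlib

open Filter Topology

namespace SturmianPaper

variable {A : Type*} [DecidableEq A]

/-- The factor `w` occurs in the infinite word `u` at position `i`. -/
def FactorAt (u : ℕ → A) (w : List A) (i : ℕ) : Prop :=
  w = (List.range w.length).map fun j => u (i + j)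

/-- `w` is a factor of the infinite word `u`. -/
def IsFactor (u : ℕ → A) (w : List A) : Prop := ∃ i, FactorAt u w i

/-- The factor complexity of `u`: the number of factors of length `n`. -/
noncomputable def complexity (u : ℕ → A) (n : ℕ) : ℕ :=
  Set.ncard {w : List A | IsFactor u w ∧ w.length = n}

/-- A Sturmian word: complexity `n + 1` for every `n` (this forces aperiodicity). -/
def IsSturmian (u : ℕ → A) : Prop := ∀ n, complexity u n = n + 1

/-- `u` is eventually periodic. -/
def EventuallyPeriodic (u : ℕ → A) : Prop :=
  ∃ p > 0, ∃ N, ∀ n ≥ N, u (n + p) = u n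

/-- `u` is uniformly recurrent: every factor occurs with bounded gaps. -/
def UniformlyRecurrent (u : ℕ → A) : Prop :=
  ∀ w, IsFactor u w → ∃ B, ∀ k, ∃ i, k ≤ i ∧ i < k + B ∧ FactorAt u w i

/-- The number of occurrences of `w` in the finite word `x`. -/
def occCount (x w : List A) : ℕ :=
  ((List.range (x.length + 1)).filter fun i => decide (w <+: x.drop i)).length

/-- `v` is a return word of the factor `w` of `u`. -/
def IsReturnWord (u : ℕ → A) (w v : List A) : Prop :=
  v ≠ [] ∧ IsFactor u (v ++ w) ∧ w <+: v ++ w ∧ occCount (v ++ w) w = 2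

/-- Recurrence function: `R n + 1` is the maximal length of a complete return word
`v ++ w` over factors `w` of length `n` and return words `v` of `w`. -/
noncomputable def recFun (u : ℕ → A) (n : ℕ) : ℕ :=
  sSup {m | ∃ w v, IsFactor u w ∧ w.length = n ∧ IsReturnWord u w v ∧
    m + 1 = v.length + w.length}

/-- `v = w ^ (|v| / |w|)`: `v` is a fractional power of `w`,
i.e. a prefix of `w w w ⋯` of length at least `|w|`. -/
def FracPow (w v : List A) : Prop :=
  w ≠ [] ∧ w.length ≤ v.length ∧ ∀ i < v.length, v[i]? = w[i % w.length]?

/-- The set of rational exponents `r` (viewed inside `ℝ`) such that `w ^ r ∈ L(u)`. -/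
def expSet (u : ℕ → A) (w : List A) : Set ℝ :=
  {r | ∃ v, IsFactor u v ∧ FracPow w v ∧ r = (v.length : ℝ) / (w.length : ℝ)}

/-- The index of the factor `w` in `u`: `sup {r ∈ ℚ | w ^ r ∈ L(u)}`. -/
noncomputable def index (u : ℕ → A) (w : List A) : ℝ := sSup (expSet u w)

/-- A finite word is primitive if it is not a proper integer power. -/
def Primitive (w : List A) : Prop :=
  w ≠ [] ∧ ∀ (z : List A) (k : ℕ), 2 ≤ k → w ≠ (List.replicate k z).flatten

/-- `w` is left special in `u` (alphabet `Bool`, `true = A`, `false = B`). -/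
def LeftSpecial (u : ℕ → Bool) (w : List Bool) : Prop :=
  IsFactor u (true :: w) ∧ IsFactor u (false :: w)

/-- `w` is right special in `u`. -/
def RightSpecial (u : ℕ → Bool) (w : List Bool) : Prop :=
  IsFactor u (w ++ [true]) ∧ IsFactor u (w ++ [false])

/-- The Sturmian word of slope `α` and intercept `x₀`, coding the orbit of `x₀`
under the exchange of the two intervals `I_A = [0, α)` (coded `true`) and
`I_B = [α, 1)` (coded `false`); the exchange is the rotation `x ↦ x + (1 - α) mod 1`. -/
noncomputable def sturmianWord (α x₀ : ℝ) : ℕ → Bool :=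
  fun n => decide (Int.fract (x₀ + n * (1 - α)) < α)

/-- The Sturmian morphism `A ↦ AᶜB`, `B ↦ A` applied to a finite word. -/
def phiW (c : ℕ) (w : List Bool) : List Bool :=
  (w.map fun b => if b then List.replicate c true ++ [false] else [true]).flatten

/-- The Sturmian morphism `A ↦ AᶜB`, `B ↦ A` applied to an infinite word. -/
noncomputable def phiInf (c : ℕ) (u : ℕ → Bool) : ℕ → Bool :=
  fun n => (phiW c ((List.range (n + 1)).map u)).getD n false


/-!
Since `β > 1/2`, every factor of length two of `u` contains an `A`. The two letters continuing
`v = w^r` periodically occur in `v` (as `r ≥ 2`), and the two letters following an occurrence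
of `v` in `u` form a factor of `u`; in both cases their image under `φ` begins with `Aᶜ`.
Applying `φ` to `w w w ⋯` and to `u` then gives the first three claims.

For the last two, `u` is read off the floor sequence `⌊x₀ + n (1 - β)⌋` (letter `A` where it
stays level), and `φ(u)` is read off the ceiling sequence `⌈y + m a⌉` in the same way, with
`a = β / (cβ + 1)` and `y = (1 - x₀) / (cβ + 1)`. Such a rotation coding has letter frequency
`1 - a`; for irrational `a` this makes it aperiodic, so by Morse–Hedlund its complexity is at
least `n + 1`, and it is at most `n + 1` because a factor of length `n` only depends on the
position of one point of `[0, 1)` among `n + 1` thresholds.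
-/

section Factors

variable {α : Type*}

def window (u : ℕ → α) (i n : ℕ) : List α := (List.range n).map fun j => u (i + j)

@[simp] lemma length_window (u : ℕ → α) (i n : ℕ) : (window u i n).length = n := by
  simp [window]

@[simp] lemma getElem_window (u : ℕ → α) (i n j : ℕ) (hj : j < (window u i n).length) :
    (window u i n)[j] = u (i + j) := by
  simp [window]

lemma window_congr {u : ℕ → α} {i i' n : ℕ} (h : ∀ j < n, u (i + j) = u (i' + j)) :
    window u i n = window u i' n :=
  List.map_congr_left fun j hj => h j (List.mem_range.1 hj)

lemma map_range_add (u : ℕ → α) (x s : ℕ) :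
    (List.range (x + s)).map u = (List.range x).map u ++ window u x s := by
  rw [List.range_add, List.map_append, List.map_map]
  rfl

lemma window_add (u : ℕ → α) (i m n : ℕ) :
    window u i (m + n) = window u i m ++ window u (i + m) n := by
  rw [window, map_range_add]
  simp [window, add_assoc]

lemma factorAt_window (u : ℕ → α) (i n : ℕ) : FactorAt u (window u i n) i := by
  simp [FactorAt, window]

lemma IsFactor.of_infix {u : ℕ → α} {v x : List α} (hv : IsFactor u v) (hx : x <:+: v) :
    IsFactor u x := by
  obtain ⟨i, hi⟩ := hv
  obtain ⟨s, t, rfl⟩ := hx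
  have hi : s ++ x ++ t = window u i (s.length + x.length + t.length) := by
    rw [hi]
    simp [window, add_assoc]
  rw [window_add, window_add] at hi
  exact ⟨i + s.length, (List.append_inj (List.append_inj hi (by simp)).1 (by simp)).2⟩

lemma setOf_isFactor_length_eq (u : ℕ → α) (n : ℕ) :
    {w | IsFactor u w ∧ w.length = n} = Set.range (window u · n) := by
  ext w
  constructor
  · rintro ⟨⟨i, hi⟩, rfl⟩
    exact ⟨i, hi.symm⟩
  · rintro ⟨i, rfl⟩
    exact ⟨⟨i, factorAt_window u i n⟩, by simp⟩

lemma complexity_eq_ncard_range_window (u : ℕ → α) (n : ℕ) :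
    complexity u n = (Set.range (window u · n)).ncard := by
  rw [complexity, setOf_isFactor_length_eq]

lemma finite_range_window [Finite α] (u : ℕ → α) (n : ℕ) : (Set.range (window u · n)).Finite :=
  (List.finite_length_eq α n).subset (by rintro _ ⟨i, rfl⟩; simp)

lemma take_window_succ (u : ℕ → α) (i n : ℕ) : (window u i (n + 1)).take n = window u i n := by
  simp [window, ← List.map_take, List.take_range]

lemma range_window_eq_image_take (u : ℕ → α) (n : ℕ) :
    Set.range (window u · n) = List.take n '' Set.range (window u · (n + 1)) := by
  rw [← Set.range_comp]
  simp only [Function.comp_def, take_window_succ]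

lemma complexity_le_complexity_succ [Finite α] (u : ℕ → α) (n : ℕ) :
    complexity u n ≤ complexity u (n + 1) := by
  rw [complexity_eq_ncard_range_window, complexity_eq_ncard_range_window,
    range_window_eq_image_take]
  exact Set.ncard_image_le (finite_range_window u (n + 1))

lemma apply_add_eq_of_window_eq [Finite α] {u : ℕ → α} {n : ℕ}
    (h : complexity u (n + 1) ≤ complexity u n) {i i' : ℕ}
    (hw : window u i n = window u i' n) : u (i + n) = u (i' + n) := by
  have hinj : Set.InjOn (List.take n) (Set.range (window u · (n + 1))) := by
    refine Set.injOn_of_ncard_image_eq ?_ (finite_range_window u (n + 1))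
    rw [← range_window_eq_image_take, ← complexity_eq_ncard_range_window,
      ← complexity_eq_ncard_range_window]
    exact le_antisymm (complexity_le_complexity_succ u n) h
  have hext := hinj ⟨i, rfl⟩ ⟨i', rfl⟩ (by simp only [take_window_succ, hw])
  simpa using congrArg (·[n]?) hext

lemma eventuallyPeriodic_of_window_determines [Finite α] {u : ℕ → α} {n : ℕ}
    (h : ∀ i i', window u i n = window u i' n → u (i + n) = u (i' + n)) :
    EventuallyPeriodic u := by
  obtain ⟨i, i', hne, heq⟩ := Finite.exists_ne_map_eq_of_infinite fun i (j : Fin n) => u (i + j)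
  wlog hlt : i < i' generalizing i i'
  · exact this i' i hne.symm heq.symm (by omega)
  have hshift : ∀ m, u (i + m) = u (i' + m) := by
    intro m
    induction m using Nat.strong_induction_on with
    | _ m ih =>
      rcases lt_or_ge m n with hm | hm
      · exact congrFun heq ⟨m, hm⟩
      · have := h (i + (m - n)) (i' + (m - n)) (window_congr fun j hj => by
          simpa only [add_assoc] using ih (m - n + j) (by omega))
        rwa [add_assoc, add_assoc, Nat.sub_add_cancel hm] at this
  refine ⟨i' - i, by omega, i, fun m hm => ?_⟩
  have := hshift (m - i)
  rwa [Nat.add_sub_cancel' hm, show i' + (m - i) = m + (i' - i) by omega, eq_comm] at this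

theorem add_one_le_complexity_of_not_eventuallyPeriodic [Finite α] {u : ℕ → α}
    (hu : ¬ EventuallyPeriodic u) (n : ℕ) : n + 1 ≤ complexity u n := by
  induction n with
  | zero => simp [complexity_eq_ncard_range_window, window]
  | succ n ih =>
    by_contra! hlt
    exact hu (eventuallyPeriodic_of_window_determines fun i i' =>
      apply_add_eq_of_window_eq (n := n) (by omega))

end Factors

section StepCoding

def stepCoding (f : ℕ → ℤ) : ℕ → Bool := fun m => decide (f (m + 1) = f m)

def UnitSteps (f : ℕ → ℤ) : Prop := ∀ m, f m ≤ f (m + 1) ∧ f (m + 1) ≤ f m + 1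

lemma count_stepCoding {f : ℕ → ℤ} (hf : UnitSteps f) (n : ℕ) :
    (((List.range n).map (stepCoding f)).count true : ℤ) = n - (f n - f 0) := by
  induction n with
  | zero => simp
  | succ n ih =>
    rw [List.range_succ, List.map_append, List.count_append]
    have := hf n
    by_cases h : f (n + 1) = f n <;> simp [stepCoding, h] <;> omega

lemma tendsto_div_natCast_of_abs_sub_le {g : ℕ → ℝ} {a C : ℝ}
    (h : ∀ n : ℕ, |g n - n * a| ≤ C) : Tendsto (fun n : ℕ => g n / n) atTop (𝓝 a) := by
  have h0 : Tendsto (fun n : ℕ => g n / n - a) atTop (𝓝 0) := by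
    refine squeeze_zero_norm' ?_ (tendsto_const_div_atTop_nhds_zero_nat C)
    filter_upwards [eventually_gt_atTop 0] with n hn
    have hn' : (0 : ℝ) < n := by exact_mod_cast hn
    rw [Real.norm_eq_abs, show g n / n - a = (g n - n * a) / n by field_simp, abs_div,
      abs_of_pos hn']
    exact div_le_div_of_nonneg_right (h n) hn'.le
  simpa using h0.add_const a

lemma EventuallyPeriodic.not_irrational_of_tendsto {u : ℕ → Bool} (hu : EventuallyPeriodic u)
    {r : ℝ} (hr : Tendsto (fun n : ℕ => (((List.range n).map u).count true : ℝ) / n) atTop (𝓝 r)) :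
    ¬ Irrational r := by
  obtain ⟨p, hp, N, hper⟩ := hu
  have hshift : ∀ k m, N ≤ m → u (m + k * p) = u m := by
    intro k
    induction k with
    | zero => simp
    | succ k ih => intro m hm; rw [add_mul, one_mul, ← add_assoc, hper _ (by omega), ih m hm]
  set cnt : ℕ → ℕ := fun n => ((List.range n).map u).count true
  set d := (window u N p).count true
  have hlin : ∀ k, cnt (N + k * p) = cnt N + k * d := by
    intro k
    induction k with
    | zero => simp
    | succ k ih =>
      have hwin : window u (N + k * p) p = window u N p :=
        window_congr fun j _ => by rw [add_right_comm, hshift k (N + j) (by omega)]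
      simp only [cnt] at ih ⊢
      rw [add_mul, one_mul, ← add_assoc, map_range_add, List.count_append, ih, hwin]
      ring
  have hsub : Tendsto (fun k : ℕ => (cnt (N + k * p) : ℝ) / ((N + k * p : ℕ) : ℝ)) atTop (𝓝 r) :=
    hr.comp (tendsto_atTop_mono (fun k => by simp only [id]; nlinarith) tendsto_id)
  have hnum : Tendsto (fun k : ℕ => ((cnt N + k * d : ℕ) : ℝ) / k) atTop (𝓝 d) :=
    tendsto_div_natCast_of_abs_sub_le (C := cnt N) fun k => by push_cast; simp
  have hden : Tendsto (fun k : ℕ => ((N + k * p : ℕ) : ℝ) / k) atTop (𝓝 p) :=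
    tendsto_div_natCast_of_abs_sub_le (C := N) fun k => by push_cast; simp
  have hlim : Tendsto (fun k : ℕ => (cnt (N + k * p) : ℝ) / ((N + k * p : ℕ) : ℝ)) atTop
      (𝓝 ((d : ℝ) / p)) := by
    refine (hnum.div hden (by positivity)).congr' ?_
    filter_upwards [eventually_gt_atTop 0] with k hk
    have hk' : (k : ℝ) ≠ 0 := by positivity
    rw [Pi.div_apply, hlin k, div_div_div_cancel_right₀ hk']
  rw [tendsto_nhds_unique hsub hlim]
  exact fun h => h ⟨(d / p : ℚ), by push_cast; rfl⟩

end StepCoding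

section RotationCoding

/-- `false` marks the steps where `⌈y + m a⌉` increases: this is the complement of the upper
mechanical word of slope `a` and intercept `y`. -/
noncomputable def rotationCoding (a y : ℝ) : ℕ → Bool := stepCoding fun m => ⌈y + m * a⌉

lemma unitSteps_ceil {a : ℝ} (ha0 : 0 ≤ a) (ha1 : a ≤ 1) (y : ℝ) :
    UnitSteps fun m => ⌈y + m * a⌉ := by
  intro m
  push_cast
  constructor
  · exact Int.ceil_mono (by nlinarith)
  · rw [← Int.ceil_add_one]
    exact Int.ceil_mono (by nlinarith)

lemma tendsto_count_rotationCoding {a : ℝ} (ha0 : 0 ≤ a) (ha1 : a ≤ 1) (y : ℝ) :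
    Tendsto (fun n : ℕ => (((List.range n).map (rotationCoding a y)).count true : ℝ) / n) atTop
      (𝓝 (1 - a)) := by
  refine tendsto_div_natCast_of_abs_sub_le (C := |y| + |(⌈y⌉ : ℝ)| + 1) fun n => ?_
  have hcount := count_stepCoding (unitSteps_ceil ha0 ha1 y) n
  simp only [CharP.cast_eq_zero, zero_mul, add_zero] at hcount
  have hcount' : (((List.range n).map (rotationCoding a y)).count true : ℝ)
      = n - (⌈y + n * a⌉ - ⌈y⌉) := by exact_mod_cast hcount
  rw [hcount', abs_le]
  have h1 := Int.le_ceil (y + n * a)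
  have h2 := Int.ceil_lt_add_one (y + n * a)
  constructor <;> linarith [abs_nonneg y, le_abs_self y, neg_abs_le y,
    le_abs_self (⌈y⌉ : ℝ), neg_abs_le (⌈y⌉ : ℝ)]

lemma not_eventuallyPeriodic_rotationCoding {a : ℝ} (hirr : Irrational a) (ha0 : 0 ≤ a)
    (ha1 : a ≤ 1) (y : ℝ) : ¬ EventuallyPeriodic (rotationCoding a y) := fun hper =>
  hper.not_irrational_of_tendsto (tendsto_count_rotationCoding ha0 ha1 y)
    (by simpa using hirr.natCast_sub 1)

lemma ceil_sub_eq_ite (x θ : ℝ) (h0 : 0 ≤ θ) (h1 : θ < 1) :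
    ⌈x - θ⌉ = if θ < x - ⌈x⌉ + 1 then ⌈x⌉ else ⌈x⌉ - 1 := by
  have := Int.le_ceil x
  have := Int.ceil_lt_add_one x
  split_ifs with h <;> rw [Int.ceil_eq_iff] <;> push_cast <;> constructor <;> linarith

/-- Thresholding a fixed family of reals gives nested sets, which are told apart by size. -/
lemma injOn_card_image_filter_lt {ι : Type*} (s : Finset ι) (σ : ι → ℝ) (T : Set ℝ) :
    Set.InjOn Finset.card ((fun θ => s.filter (θ < σ ·)) '' T) := by
  have hnest : ∀ θ θ', θ ≤ θ' → s.filter (θ' < σ ·) ⊆ s.filter (θ < σ ·) :=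
    fun θ θ' h => Finset.monotone_filter_right _ fun _ _ hx => h.trans_lt hx
  rintro _ ⟨θ, -, rfl⟩ _ ⟨θ', -, rfl⟩ hcard
  rcases le_total θ θ' with h | h
  · exact (Finset.eq_of_subset_of_card_le (hnest θ θ' h) hcard.le).symm
  · exact Finset.eq_of_subset_of_card_le (hnest θ' θ h) hcard.ge

lemma ncard_image_filter_lt_le (σ : ℕ → ℝ) (n : ℕ) {T : Set ℝ} (hT : ∀ θ ∈ T, θ < σ 0) :
    ((fun θ => (Finset.range (n + 1)).filter (θ < σ ·)) '' T).ncard ≤ n + 1 := by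
  have hmaps : ∀ s ∈ (fun θ => (Finset.range (n + 1)).filter (θ < σ ·)) '' T,
      s.card ∈ (Finset.Icc 1 (n + 1) : Set ℕ) := by
    rintro _ ⟨θ, hθ, rfl⟩
    refine Finset.mem_coe.2 (Finset.mem_Icc.2 ⟨Finset.card_pos.2 ⟨0, ?_⟩, ?_⟩)
    · simpa using hT θ hθ
    · exact (Finset.card_filter_le _ _).trans (by simp)
  simpa using Set.ncard_le_ncard_of_injOn _ hmaps (injOn_card_image_filter_lt _ σ _)

theorem complexity_rotationCoding_le (a y : ℝ) (n : ℕ) :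
    complexity (rotationCoding a y) n ≤ n + 1 := by
  set σ : ℕ → ℝ := fun j => j * a - ⌈(j : ℝ) * a⌉ + 1
  set S : ℝ → Finset ℕ := fun θ => (Finset.range (n + 1)).filter (θ < σ ·)
  set lev : Finset ℕ → ℕ → ℤ := fun s j => if j ∈ s then ⌈(j : ℝ) * a⌉ else ⌈(j : ℝ) * a⌉ - 1
  set V : Finset ℕ → List Bool :=
    fun s => (List.range n).map fun j => decide (lev s (j + 1) = lev s j)
  -- the factor at `i` only depends on the position of `⌈z⌉ - z ∈ [0, 1)` among the `σ j`
  have hwindow : Set.range (window (rotationCoding a y) · n) ⊆ V '' (S '' Set.Ico 0 1) := by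
    rintro _ ⟨i, rfl⟩
    set z := y + i * a
    have h0 : 0 ≤ (⌈z⌉ : ℝ) - z := by linarith [Int.le_ceil z]
    have h1 : (⌈z⌉ : ℝ) - z < 1 := by linarith [Int.ceil_lt_add_one z]
    have hlev : ∀ j ≤ n, ⌈y + ((i + j : ℕ) : ℝ) * a⌉ = lev (S (⌈z⌉ - z)) j + ⌈z⌉ := by
      intro j hj
      rw [show y + ((i + j : ℕ) : ℝ) * a = (j : ℝ) * a - (⌈z⌉ - z) + ⌈z⌉ by push_cast; ring,
        Int.ceil_add_intCast, ceil_sub_eq_ite _ _ h0 h1]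
      simp [lev, S, σ, Nat.lt_succ_of_le hj]
    refine ⟨S (⌈z⌉ - z), ⟨_, ⟨h0, h1⟩, rfl⟩, List.map_congr_left fun j hj => ?_⟩
    have hj := List.mem_range.1 hj
    simp only [rotationCoding, stepCoding]
    rw [show i + j + 1 = i + (j + 1) from rfl]
    simp only [hlev j hj.le, hlev (j + 1) hj, add_left_inj]
  have hfin : (S '' Set.Ico 0 1).Finite :=
    (Finset.range (n + 1)).powerset.finite_toSet.subset (by
      rintro _ ⟨θ, -, rfl⟩
      exact Finset.mem_powerset.2 (Finset.filter_subset _ _))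
  calc complexity (rotationCoding a y) n
      = (Set.range (window (rotationCoding a y) · n)).ncard :=
        complexity_eq_ncard_range_window _ n
    _ ≤ (V '' (S '' Set.Ico 0 1)).ncard := Set.ncard_le_ncard hwindow (hfin.image V)
    _ ≤ (S '' Set.Ico 0 1).ncard := Set.ncard_image_le hfin
    _ ≤ n + 1 := ncard_image_filter_lt_le σ n fun θ hθ => by simpa [σ] using hθ.2

theorem isSturmian_rotationCoding {a : ℝ} (hirr : Irrational a) (ha0 : 0 ≤ a) (ha1 : a ≤ 1)
    (y : ℝ) : IsSturmian (rotationCoding a y) := fun n =>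
  le_antisymm (complexity_rotationCoding_le a y n)
    (add_one_le_complexity_of_not_eventuallyPeriodic
      (not_eventuallyPeriodic_rotationCoding hirr ha0 ha1 y) n)

end RotationCoding

section SturmianWord

lemma unitSteps_floor {d : ℝ} (hd0 : 0 ≤ d) (hd1 : d ≤ 1) (x : ℝ) :
    UnitSteps fun m => ⌊x + m * d⌋ := by
  intro m
  push_cast
  constructor
  · exact Int.floor_mono (by nlinarith)
  · rw [← Int.floor_add_one]
    exact Int.floor_mono (by nlinarith)

lemma floor_add_eq_floor_iff {z d : ℝ} (hd : 0 ≤ d) : ⌊z + d⌋ = ⌊z⌋ ↔ Int.fract z + d < 1 := by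
  rw [show z + d = Int.fract z + d + ⌊z⌋ by linarith [Int.floor_add_fract z],
    Int.floor_add_intCast, add_eq_right, Int.floor_eq_zero_iff]
  exact ⟨fun h => h.2, fun h => ⟨by linarith [Int.fract_nonneg z], h⟩⟩

lemma sturmianWord_eq_stepCoding {β : ℝ} (hβ1 : β ≤ 1) (x₀ : ℝ) :
    sturmianWord β x₀ = stepCoding fun m => ⌊x₀ + m * (1 - β)⌋ := by
  funext m
  simp only [sturmianWord, stepCoding]
  refine decide_eq_decide.2 ?_
  rw [Nat.cast_succ, add_one_mul, ← add_assoc, floor_add_eq_floor_iff (by linarith)]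
  exact ⟨fun h => by linarith, fun h => by linarith⟩

lemma count_sturmianWord {β x₀ : ℝ} (hβ0 : 0 ≤ β) (hβ1 : β ≤ 1) (hx0 : 0 ≤ x₀) (hx1 : x₀ < 1)
    (n : ℕ) : (((List.range n).map (sturmianWord β x₀)).count true : ℤ)
      = n - ⌊x₀ + n * (1 - β)⌋ := by
  rw [sturmianWord_eq_stepCoding hβ1,
    count_stepCoding (unitSteps_floor (by linarith) (by linarith) x₀) n]
  simp [Int.floor_eq_zero_iff.2 ⟨hx0, hx1⟩]

/-- Since `2 (1 - β) < 1`, the floor sequence cannot increase twice in a row. -/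
lemma sturmianWord_eq_true_or_succ {β : ℝ} (hβ : 1 / 2 < β) (hβ1 : β < 1) (x₀ : ℝ) (m : ℕ) :
    sturmianWord β x₀ m = true ∨ sturmianWord β x₀ (m + 1) = true := by
  rw [sturmianWord_eq_stepCoding hβ1.le]
  by_contra! h
  simp only [stepCoding, ne_eq, decide_eq_true_eq] at h
  have h1 := unitSteps_floor (d := 1 - β) (by linarith) (by linarith) x₀ m
  have h2 := unitSteps_floor (d := 1 - β) (by linarith) (by linarith) x₀ (m + 1)
  beta_reduce at h1 h2
  have h3 : ⌊x₀ + ((m + 1 + 1 : ℕ) : ℝ) * (1 - β)⌋ ≤ ⌊x₀ + m * (1 - β)⌋ + 1 := by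
    rw [← Int.floor_add_one]
    exact Int.floor_mono (by push_cast; linarith)
  omega

end SturmianWord

section Powers

variable {α : Type*}

def listPow (w : List α) (K : ℕ) : List α := (List.replicate K w).flatten

lemma listPow_add (w : List α) (m n : ℕ) : listPow w (m + n) = listPow w m ++ listPow w n := by
  simp only [listPow, List.replicate_add, List.flatten_append]

lemma listPow_succ (w : List α) (K : ℕ) : listPow w (K + 1) = w ++ listPow w K := by
  simp [listPow, List.replicate_succ]

@[simp] lemma length_listPow (w : List α) (K : ℕ) : (listPow w K).length = K * w.length := by
  simp [listPow, List.length_flatten]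

lemma getElem?_listPow (w : List α) {K i : ℕ} (hi : i < K * w.length) :
    (listPow w K)[i]? = w[i % w.length]? := by
  induction K generalizing i with
  | zero => simp at hi
  | succ K ih =>
    rw [Nat.succ_mul] at hi
    rw [listPow_succ, List.getElem?_append]
    split_ifs with h
    · rw [Nat.mod_eq_of_lt h]
    · rw [ih (by omega), ← Nat.mod_eq_sub_mod (by omega)]

lemma prefix_listPow_iff {w x : List α} {K : ℕ} :
    x <+: listPow w K ↔ x.length ≤ K * w.length ∧ ∀ i < x.length, x[i]? = w[i % w.length]? := by
  constructor
  · intro h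
    refine ⟨by simpa using h.length_le, fun i hi => ?_⟩
    rw [← getElem?_listPow w (by simpa using hi.trans_le h.length_le)]
    obtain ⟨t, ht⟩ := h
    rw [← ht, List.getElem?_append_left hi]
  · rintro ⟨hlen, hx⟩
    rw [List.prefix_iff_eq_take]
    refine List.ext_getElem? fun i => ?_
    rw [List.getElem?_take]
    split_ifs with hi
    · rw [hx i hi, getElem?_listPow w (by omega)]
    · exact List.getElem?_eq_none (by omega)

lemma FracPow.prefix_listPow {w v : List α} (h : FracPow w v) {K : ℕ}
    (hK : v.length ≤ K * w.length) : v <+: listPow w K :=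
  prefix_listPow_iff.2 ⟨hK, h.2.2⟩

lemma FracPow.of_prefix_listPow {w v : List α} (hw : w ≠ []) (hlen : w.length ≤ v.length)
    {K : ℕ} (h : v <+: listPow w K) : FracPow w v :=
  ⟨hw, hlen, (prefix_listPow_iff.1 h).2⟩

lemma FracPow.listPow_prefix {w v : List α} (h : FracPow w v) {n : ℕ}
    (hn : n * w.length ≤ v.length) : listPow w n <+: v := by
  have hw : 0 < w.length := List.length_pos_iff.2 h.1
  refine List.prefix_of_prefix_length_le ?_ (h.prefix_listPow (K := n + v.length) ?_) (by simpa)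
  · rw [listPow_add]
    exact List.prefix_append _ _
  · nlinarith

/-- The two letters continuing `v` periodically already occur in `v`, `2 |w|` positions earlier. -/
lemma FracPow.exists_extension {w v : List α} (h : FracPow w v) (h2 : 2 * w.length ≤ v.length) :
    ∃ x : List α, x.length = 2 ∧ x <:+: v ∧ v ++ x <+: listPow w (v.length + 2) := by
  have hw : 0 < w.length := List.length_pos_iff.2 h.1
  set j := v.length - 2 * w.length
  have hx2 : ((v.drop j).take 2).length = 2 := by simp; omega
  refine ⟨(v.drop j).take 2, hx2,
    (List.take_prefix _ _).isInfix.trans (List.drop_suffix _ _).isInfix, ?_⟩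
  refine prefix_listPow_iff.2 ⟨by rw [List.length_append, hx2]; nlinarith, fun i hi => ?_⟩
  rw [List.length_append, hx2] at hi
  rw [List.getElem?_append]
  split_ifs with hiv
  · exact h.2.2 i hiv
  · rw [List.getElem?_take_of_lt (by omega), List.getElem?_drop, h.2.2 _ (by omega),
      show j + (i - v.length) = i - w.length * 2 by omega, Nat.sub_mul_mod (by omega)]

end Powers

section Morphism

lemma phiW_append (c : ℕ) (x y : List Bool) : phiW c (x ++ y) = phiW c x ++ phiW c y := by
  simp [phiW]

lemma phiW_true (c : ℕ) : phiW c [true] = List.replicate c true ++ [false] := by simp [phiW]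

lemma phiW_false (c : ℕ) : phiW c [false] = [true] := by simp [phiW]

lemma length_phiW (c : ℕ) (x : List Bool) :
    (phiW c x).length = x.length + c * x.count true := by
  induction x with
  | nil => rfl
  | cons b x ih =>
    rw [← List.singleton_append, phiW_append, List.length_append, ih]
    cases b <;> simp [phiW_true, phiW_false] <;> ring

lemma phiW_ne_nil (c : ℕ) {x : List Bool} (hx : x ≠ []) : phiW c x ≠ [] := by
  rw [← List.length_pos_iff, length_phiW]
  exact Nat.add_pos_left (List.length_pos_iff.2 hx) _

lemma phiW_listPow (c : ℕ) (w : List Bool) (K : ℕ) :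
    phiW c (listPow w K) = listPow (phiW c w) K := by
  induction K with
  | zero => rfl
  | succ K ih => rw [listPow_add, listPow_add, phiW_append, ih]; simp [listPow]

lemma prefix_phiW_of_prefix (c : ℕ) {x y : List Bool} (h : x <+: y) : phiW c x <+: phiW c y := by
  obtain ⟨t, rfl⟩ := h
  rw [phiW_append]
  exact List.prefix_append _ _

lemma replicate_prefix_phiW (c : ℕ) {x : List Bool} (hx : x.length = 2) (htrue : true ∈ x) :
    List.replicate c true <+: phiW c x := by
  match x, hx, htrue with
  | [true, b], _, _ =>
    rw [show [true, b] = [true] ++ [b] from rfl, phiW_append, phiW_true, List.append_assoc]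
    exact List.prefix_append _ _
  | [false, true], _, _ =>
    rw [show [false, true] = [false] ++ [true] from rfl, phiW_append, phiW_false, phiW_true,
      ← List.append_assoc, List.singleton_append, ← List.replicate_succ, List.replicate_succ',
      List.append_assoc]
    exact List.prefix_append _ _
  | [false, false], _, h => simp at h

lemma two_mul_length_phiW_le (c : ℕ) {w v : List Bool} (h : FracPow w v)
    (h2 : 2 * w.length ≤ v.length) : 2 * (phiW c w).length ≤ (phiW c v).length := by
  have := (prefix_phiW_of_prefix c (h.listPow_prefix h2)).length_le
  rwa [phiW_listPow, length_listPow] at this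

theorem fracPow_phiW_append_replicate (c : ℕ) {w v : List Bool} (h : FracPow w v)
    (h2 : 2 * w.length ≤ v.length) (hv : ∀ x, x.length = 2 → x <:+: v → true ∈ x) :
    FracPow (phiW c w) (phiW c v ++ List.replicate c true) := by
  obtain ⟨x, hx2, hxv, hext⟩ := h.exists_extension h2
  refine FracPow.of_prefix_listPow (K := v.length + 2) (phiW_ne_nil c h.1) ?_ ?_
  · have := two_mul_length_phiW_le c h h2
    simp only [List.length_append, List.length_replicate]
    omega
  · rw [← phiW_listPow]
    refine List.IsPrefix.trans ?_ (prefix_phiW_of_prefix c hext)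
    rw [phiW_append, List.prefix_append_right_inj]
    exact replicate_prefix_phiW c hx2 (hv x hx2 hxv)

end Morphism

section InfiniteImage

lemma true_mem_of_isFactor {u : ℕ → Bool} (hu : ∀ m, u m = true ∨ u (m + 1) = true)
    {x : List Bool} (hx : IsFactor u x) (h2 : x.length = 2) : true ∈ x := by
  obtain ⟨m, hm⟩ := hx
  have hm : x = window u m 2 := by rw [hm, h2]; rfl
  subst hm
  rcases hu m with h | h <;> simp [window, List.range_succ, h]

lemma phiW_map_range_succ (c : ℕ) (u : ℕ → Bool) (n : ℕ) :
    phiW c ((List.range (n + 1)).map u) = phiW c ((List.range n).map u) ++ phiW c [u n] := by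
  rw [List.range_succ, List.map_append, phiW_append]
  rfl

lemma phiInf_eq_getD (c : ℕ) (u : ℕ → Bool) {N m : ℕ}
    (hm : m < (phiW c ((List.range N).map u)).length) :
    phiInf c u m = (phiW c ((List.range N).map u)).getD m false := by
  have hmono : ∀ {N M}, N ≤ M →
      phiW c ((List.range N).map u) <+: phiW c ((List.range M).map u) := fun {N M} h => by
    rw [← Nat.add_sub_cancel' h, map_range_add, phiW_append]
    exact List.prefix_append _ _
  have hm' : m < (phiW c ((List.range (m + 1)).map u)).length := by
    rw [length_phiW]
    simp only [List.length_map, List.length_range]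
    omega
  rcases le_total (m + 1) N with h | h
  · obtain ⟨t, ht⟩ := hmono h
    rw [phiInf, ← ht, List.getD_append _ _ _ _ hm']
  · obtain ⟨t, ht⟩ := hmono h
    rw [phiInf, ← ht, List.getD_append _ _ _ _ hm]

lemma factorAt_phiInf (c : ℕ) (u : ℕ → Bool) {N : ℕ} {X y z : List Bool}
    (h : phiW c ((List.range N).map u) = X ++ y ++ z) : FactorAt (phiInf c u) y X.length := by
  refine List.ext_getElem (by simp) fun k hk _ => ?_
  have hlt : X.length + k < (phiW c ((List.range N).map u)).length := by simp [h]; omega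
  simp only [List.getElem_map, List.getElem_range]
  rw [phiInf_eq_getD c u hlt, h, List.append_assoc, List.getD_append_right _ _ _ _ (by omega),
    Nat.add_sub_cancel_left, List.getD_append _ _ _ _ hk, List.getD_eq_getElem]

theorem isFactor_phiInf_append_replicate (c : ℕ) {u : ℕ → Bool}
    (hu : ∀ m, u m = true ∨ u (m + 1) = true) {v : List Bool} (hv : IsFactor u v) :
    IsFactor (phiInf c u) (phiW c v ++ List.replicate c true) := by
  obtain ⟨i, hi⟩ := hv
  have hi : v = window u i v.length := hi
  obtain ⟨t, ht⟩ := replicate_prefix_phiW c (x := window u (i + v.length) 2) (by simp)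
    (true_mem_of_isFactor hu ⟨_, factorAt_window u _ 2⟩ (by simp))
  refine ⟨_, factorAt_phiInf c u (N := i + (v.length + 2))
    (X := phiW c ((List.range i).map u)) (z := t) ?_⟩
  rw [map_range_add, window_add, ← hi, phiW_append, phiW_append, ← ht]
  simp only [List.append_assoc]

lemma phiInf_length_phiW_add (c : ℕ) (u : ℕ → Bool) (n j : ℕ) (hj : j < (phiW c [u n]).length) :
    phiInf c u ((phiW c ((List.range n).map u)).length + j) = (phiW c [u n]).getD j false := by
  have hfac := factorAt_phiInf c u (N := n + 1) (z := [])
    (by rw [phiW_map_range_succ, List.append_nil])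
  rw [List.getD_eq_getElem _ _ hj, List.getElem_of_eq hfac hj]
  simp

lemma exists_eq_length_phiW_add (c : ℕ) (u : ℕ → Bool) (m : ℕ) :
    ∃ n j, j < (phiW c [u n]).length ∧ m = (phiW c ((List.range n).map u)).length + j := by
  induction m with
  | zero => exact ⟨0, 0, by simp [length_phiW], rfl⟩
  | succ m ih =>
    obtain ⟨n, j, hj, rfl⟩ := ih
    by_cases hj1 : j + 1 < (phiW c [u n]).length
    · exact ⟨n, j + 1, hj1, rfl⟩
    · refine ⟨n + 1, 0, by simp [length_phiW], ?_⟩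
      rw [phiW_map_range_succ, List.length_append]
      omega

end InfiniteImage

section Renormalization

lemma ceil_eq_ceil_iff_le_one {s s' : ℝ} (hs0 : 0 < s) (hs1 : s ≤ 1) (hss' : s ≤ s') :
    ⌈s'⌉ = ⌈s⌉ ↔ s' ≤ 1 := by
  rw [show ⌈s⌉ = 1 from Int.ceil_eq_iff.2 ⟨by norm_num; linarith, by simpa⟩, Int.ceil_eq_iff]
  norm_num
  intro _
  linarith

variable {β x₀ : ℝ}

/-- With `G = ⌊x₀ + n (1 - β)⌋`, the image of `u n` starts at position `n + c (n - G)` of `φ(u)`,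
where the rotation orbit `y + m a` is at `n - G + (1 - fract (x₀ + n (1 - β))) / (cβ + 1)`. -/
lemma rotationCoding_length_phiW_add (hβ0 : 0 ≤ β) (hβ1 : β ≤ 1) (hx0 : 0 ≤ x₀) (hx1 : x₀ < 1)
    {c j : ℕ} (hj : j ≤ c) (n : ℕ) :
    rotationCoding (β / (c * β + 1)) ((1 - x₀) / (c * β + 1))
        ((phiW c ((List.range n).map (sturmianWord β x₀))).length + j)
      = decide ((j + 1) * β ≤ c * β + Int.fract (x₀ + n * (1 - β))) := by
  set F := (phiW c ((List.range n).map (sturmianWord β x₀))).length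
  set G := ⌊x₀ + n * (1 - β)⌋
  set t := Int.fract (x₀ + n * (1 - β))
  have hden : 0 < (c : ℝ) * β + 1 := by positivity
  have ht0 : 0 ≤ t := Int.fract_nonneg _
  have ht1 : t < 1 := Int.fract_lt_one _
  have hF : (F : ℝ) = n + c * (n - G) := by
    have := count_sturmianWord hβ0 hβ1 hx0 hx1 n
    simp only [F, length_phiW, List.length_map, List.length_range]
    push_cast
    rw [show (((List.range n).map (sturmianWord β x₀)).count true : ℝ) = n - G by
      exact_mod_cast this]
  have hpos : ∀ k : ℕ, (1 - x₀) / (c * β + 1) + ((F + k : ℕ) : ℝ) * (β / (c * β + 1))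
      = (1 - t + k * β) / (c * β + 1) + ((n - G : ℤ) : ℝ) := by
    intro k
    rw [show t = x₀ + n * (1 - β) - G from (Int.self_sub_floor _).symm]
    push_cast
    rw [hF]
    field_simp
    ring
  have hj' : (j : ℝ) ≤ c := by exact_mod_cast hj
  simp only [rotationCoding, stepCoding]
  refine decide_eq_decide.2 ?_
  rw [show F + j + 1 = F + (j + 1) from rfl, hpos, hpos, Int.ceil_add_intCast,
    Int.ceil_add_intCast, add_left_inj, ceil_eq_ceil_iff_le_one, div_le_one hden]
  · push_cast
    constructor <;> intro <;> linarith
  · exact div_pos (by nlinarith) hden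
  · rw [div_le_one hden]
    nlinarith
  · gcongr
    linarith

theorem phiInf_sturmianWord (hβ0 : 0 ≤ β) (hβ1 : β ≤ 1) (hx0 : 0 ≤ x₀) (hx1 : x₀ < 1) (c : ℕ) :
    phiInf c (sturmianWord β x₀) = rotationCoding (β / (c * β + 1)) ((1 - x₀) / (c * β + 1)) := by
  funext m
  obtain ⟨n, j, hj, rfl⟩ := exists_eq_length_phiW_add c (sturmianWord β x₀) m
  have ht0 := Int.fract_nonneg (x₀ + n * (1 - β))
  rw [phiInf_length_phiW_add c _ n j hj]
  cases hu : sturmianWord β x₀ n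
  · have hβt : β ≤ Int.fract (x₀ + n * (1 - β)) := by simpa [sturmianWord] using hu
    rw [hu, phiW_false] at hj
    rw [phiW_false]
    obtain rfl : j = 0 := by simpa using hj
    rw [rotationCoding_length_phiW_add hβ0 hβ1 hx0 hx1 (Nat.zero_le c)]
    simp only [List.getD_cons_zero, CharP.cast_eq_zero, zero_add, one_mul]
    exact (decide_eq_true (by nlinarith)).symm
  · have hβt : Int.fract (x₀ + n * (1 - β)) < β := by simpa [sturmianWord] using hu
    rw [hu, phiW_true] at hj
    rw [phiW_true]
    simp only [List.length_append, List.length_replicate, List.length_singleton] at hj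
    rw [rotationCoding_length_phiW_add hβ0 hβ1 hx0 hx1 (by omega : j ≤ c)]
    rcases Nat.lt_or_ge j c with hjc | hjc
    · have : ((j : ℝ) + 1) ≤ c := by exact_mod_cast hjc
      rw [List.getD_append _ _ _ _ (by simpa), List.getD_replicate _ hjc]
      exact (decide_eq_true (by nlinarith)).symm
    · obtain rfl : j = c := by omega
      rw [List.getD_append_right _ _ _ _ (by simp)]
      simp only [List.length_replicate, Nat.sub_self, List.getD_cons_zero]
      exact (decide_eq_false (by linarith)).symm

end Renormalization

theorem morphism_power_lemma_general (β x₀ : ℝ) (hirr : Irrational β)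
    (hβ : 1/2 < β) (hβ1 : β < 1) (hx0 : 0 ≤ x₀) (hx1 : x₀ < 1)
    (c : ℕ)
    (w v : List Bool)
    (hv : IsFactor (sturmianWord β x₀) v)
    (hpow : FracPow w v) (hr2 : 2 * w.length ≤ v.length) :
    FracPow (phiW c w) (phiW c v ++ List.replicate c true) ∧
    2 * (phiW c w).length ≤ (phiW c v ++ List.replicate c true).length ∧
    IsFactor (phiInf c (sturmianWord β x₀)) (phiW c v ++ List.replicate c true) ∧
    IsSturmian (phiInf c (sturmianWord β x₀)) ∧
    Tendsto (fun n => ((((List.range n).map (phiInf c (sturmianWord β x₀))).count true : ℝ)) / (n : ℝ))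
      atTop (nhds ((c * β + 1 - β) / (c * β + 1))) := by
  have hβ0 : 0 < β := by linarith
  have hu := sturmianWord_eq_true_or_succ hβ hβ1 x₀
  have hslope0 : 0 ≤ β / (c * β + 1) := by positivity
  have hslope1 : β / (c * β + 1) ≤ 1 := by
    rw [div_le_one (by positivity)]
    nlinarith
  -- `β / (cβ + 1) = (c + β⁻¹)⁻¹`
  have hslope : Irrational (β / (c * β + 1)) := by
    convert (hirr.inv.natCast_add c).inv using 1
    field_simp
  have hcoding := phiInf_sturmianWord hβ0.le hβ1.le hx0 hx1 c
  refine ⟨fracPow_phiW_append_replicate c hpow hr2 fun x hx hxv =>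
      true_mem_of_isFactor hu (hv.of_infix hxv) hx, ?_,
    isFactor_phiInf_append_replicate c hu hv, ?_, ?_⟩
  · have := two_mul_length_phiW_le c hpow hr2
    simp only [List.length_append, List.length_replicate]
    omega
  · rw [hcoding]
    exact isSturmian_rotationCoding hslope hslope0 hslope1 _
  · rw [hcoding]
    convert tendsto_count_rotationCoding hslope0 hslope1 _ using 2
    field_simp

/-- key lemma: if `v = w^r`, `r ≥ 2`, is a factor of a Sturmian
word `u` of slope `β = [0,1,b₂,…]`, then `v' = φ(v)Aᶜ` is a rational power of
`w' = φ(w)` with exponent `≥ 2`, and `v'` is a factor of the Sturmian word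
`φ(u)`, whose slope is `(cβ + 1 − β)/(cβ + 1) = [0,1,c,b₂,b₃,…]`. -/
theorem morphism_power_lemma (β x₀ : ℝ) (hirr : Irrational β)
    (hβ : 1/2 < β) (hβ1 : β < 1) (hx0 : 0 ≤ x₀) (hx1 : x₀ < 1)
    (c : ℕ) (hc : 1 ≤ c)
    (b p q : ℕ → ℕ) (hb1 : b 1 = 1) (hbpos : ∀ n, 1 ≤ n → 1 ≤ b n)
    (hq0 : q 0 = 1) (hq1 : q 1 = 1)
    (hqrec : ∀ N, q (N + 2) = b (N + 2) * q (N + 1) + q N)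
    (hp0 : p 0 = 0) (hp1 : p 1 = 1)
    (hprec : ∀ N, p (N + 2) = b (N + 2) * p (N + 1) + p N)
    (hcf : Tendsto (fun N => (p N : ℝ) / (q N : ℝ)) atTop (nhds β))
    (w v : List Bool) (hw : IsFactor (sturmianWord β x₀) w)
    (hv : IsFactor (sturmianWord β x₀) v)
    (hpow : FracPow w v) (hr2 : 2 * w.length ≤ v.length) :
    FracPow (phiW c w) (phiW c v ++ List.replicate c true) ∧
    2 * (phiW c w).length ≤ (phiW c v ++ List.replicate c true).length ∧
    IsFactor (phiInf c (sturmianWord β x₀)) (phiW c v ++ List.replicate c true) ∧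
    IsSturmian (phiInf c (sturmianWord β x₀)) ∧
    Tendsto (fun n => ((((List.range n).map (phiInf c (sturmianWord β x₀))).count true : ℝ)) / (n : ℝ))
      atTop (nhds ((c * β + 1 - β) / (c * β + 1))) :=
  morphism_power_lemma_general β x₀ hirr hβ hβ1 hx0 hx1 c w v hv hpow hr2

end SturmianPaper
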